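/- A function f(z) = z - Σ_{n≥2} a_n z^n with a_n ≥ 0 is starlike of order α (i.e., Re(z f'(z)/f(z)) > α on U) if and only if Σ_{n≥2} (n-α) a_n ≤ 1-α. -/

import Mathlib

/-!
On the real segment `0 < r < 1` all quantities are real and
`r f'(r) - α f(r) = r ((1 - α) - ∑ (n + 2 - α) a (n + 2) r ^ (n + 1))`.
Starlikeness makes this nonzero, so by continuity and its value `1 - α > 0` at `r = 0` the
bracket stays positive; letting `r → 1` bounds every partial sum of `∑ (n + 2 - α) a (n + 2)`
by `1 - α`. Conversely, the coefficient bound gives `|z f'(z) - f(z)| < (1 - α) |f(z)|`, i.e.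
`z f'(z) / f(z)` lies in the disc of radius `1 - α` about `1`.
-/

open Complex Set Filter Topology

section PowerSeriesOnUnitInterval

variable {c : ℕ → ℝ}

theorem tsum_mul_pow_succ_lt_of_ne (hc : ∀ n, 0 ≤ c n) {M : ℝ} (hM : 0 < M)
    (hsum : ∀ r ∈ Ioo (0 : ℝ) 1, Summable fun n => c n * r ^ (n + 1))
    (hne : ∀ r ∈ Ioo (0 : ℝ) 1, ∑' n, c n * r ^ (n + 1) ≠ M) {r : ℝ} (hr : r ∈ Ioo (0 : ℝ) 1) :
    ∑' n, c n * r ^ (n + 1) < M := by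
  set g : ℝ → ℝ := fun x => ∑' n, c n * x ^ (n + 1)
  have hg : ContinuousOn g (Icc 0 r) := by
    refine continuousOn_tsum (fun n => by fun_prop) (hsum r hr) fun n x hx => ?_
    rw [Real.norm_eq_abs, abs_mul, abs_of_nonneg (hc n), abs_pow, abs_of_nonneg hx.1]
    exact mul_le_mul_of_nonneg_left (pow_le_pow_left₀ hx.1 hx.2 _) (hc n)
  have hg0 : g 0 = 0 := by simp [g]
  by_contra! hle
  obtain ⟨x, hx, hgx⟩ := isPreconnected_Icc.intermediate_value (left_mem_Icc.2 hr.1.le)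
    (right_mem_Icc.2 hr.1.le) hg ⟨by rw [hg0]; exact hM.le, hle⟩
  have hx0 : x ≠ 0 := by rintro rfl; exact hM.ne (hg0 ▸ hgx)
  exact hne x ⟨lt_of_le_of_ne hx.1 hx0.symm, hx.2.trans_lt hr.2⟩ hgx

theorem summable_and_tsum_le_of_tsum_mul_pow_succ_le (hc : ∀ n, 0 ≤ c n) {M : ℝ}
    (hsum : ∀ r ∈ Ioo (0 : ℝ) 1, Summable fun n => c n * r ^ (n + 1))
    (hle : ∀ r ∈ Ioo (0 : ℝ) 1, ∑' n, c n * r ^ (n + 1) ≤ M) :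
    Summable c ∧ ∑' n, c n ≤ M := by
  have hpartial : ∀ N, ∑ n ∈ Finset.range N, c n ≤ M := by
    intro N
    have hlim : Tendsto (fun r : ℝ => ∑ n ∈ Finset.range N, c n * r ^ (n + 1)) (𝓝[<] 1)
        (𝓝 (∑ n ∈ Finset.range N, c n)) := by
      have : Continuous fun r : ℝ => ∑ n ∈ Finset.range N, c n * r ^ (n + 1) := by fun_prop
      simpa using (this.tendsto 1).mono_left nhdsWithin_le_nhds
    refine le_of_tendsto hlim ?_
    filter_upwards [Ioo_mem_nhdsLT (zero_lt_one' ℝ)] with r hr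
    exact ((hsum r hr).sum_le_tsum _ fun n _ => mul_nonneg (hc n) (pow_nonneg hr.1.le _)).trans
      (hle r hr)
  exact ⟨summable_of_sum_range_le hc hpartial, Real.tsum_le_of_sum_range_le hc hpartial⟩

end PowerSeriesOnUnitInterval

-- With `v = 0` the quotient is the junk value `0`, which `0 ≤ α` excludes.
theorem ne_zero_of_lt_re_div {α : ℝ} (hα : 0 ≤ α) {w v : ℂ} (h : α < (w / v).re) :
    w - α * v ≠ 0 := by
  intro hwv
  rcases eq_or_ne v 0 with rfl | hv
  · rw [div_zero, zero_re] at h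
    exact hα.not_gt h
  · rw [sub_eq_zero.1 hwv, mul_div_cancel_right₀ _ hv, ofReal_re] at h
    exact h.false

theorem lt_re_div_of_norm_sub_lt {α : ℝ} {w v : ℂ} (h : ‖w - v‖ < (1 - α) * ‖v‖) :
    α < (w / v).re := by
  have hv : v ≠ 0 := by rintro rfl; simp at h; linarith [norm_nonneg w]
  have hnorm : ‖w / v - 1‖ < 1 - α := by
    rwa [div_sub_one hv, norm_div, div_lt_iff₀ (norm_pos_iff.2 hv)]
  have hre := (abs_lt.1 ((abs_re_le_norm _).trans_lt hnorm)).1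
  rw [sub_re, one_re] at hre
  linarith

theorem norm_le_tsum_of_hasSum_mul_pow {d : ℕ → ℝ} (hd : ∀ n, 0 ≤ d n) {z s : ℂ}
    (hs : HasSum (fun n : ℕ => (d n : ℂ) * z ^ (n + 2)) s)
    (ht : Summable fun n : ℕ => d n * ‖z‖ ^ (n + 2)) :
    ‖s‖ ≤ ∑' n, d n * ‖z‖ ^ (n + 2) :=
  hs.norm_le_of_bounded ht.hasSum fun n => by
    rw [norm_mul, norm_pow, norm_real, Real.norm_of_nonneg (hd n)]

section StarlikeCriterion

variable {f : ℂ → ℂ} {b : ℕ → ℝ}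

theorem summable_coeff_mul_pow
    (hf : ∀ z ∈ Metric.ball (0 : ℂ) 1, HasSum (fun n : ℕ => (b n : ℂ) * z ^ (n + 2)) (z - f z))
    {r : ℝ} (hr0 : 0 ≤ r) (hr1 : r < 1) : Summable fun n => b n * r ^ (n + 2) := by
  have hr : (r : ℂ) ∈ Metric.ball (0 : ℂ) 1 := by simpa [abs_of_nonneg hr0]
  exact summable_ofReal.1 <| (hf r hr).summable.congr fun n => by push_cast; rfl

theorem hasSum_one_sub_deriv (hb : ∀ n, 0 ≤ b n)
    (hf : ∀ z ∈ Metric.ball (0 : ℂ) 1, HasSum (fun n : ℕ => (b n : ℂ) * z ^ (n + 2)) (z - f z))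
    {z : ℂ} (hz : z ∈ Metric.ball (0 : ℂ) 1) :
    HasSum (fun n : ℕ => (b n : ℂ) * ((n + 2) * z ^ (n + 1))) (1 - deriv f z) := by
  obtain ⟨ρ, hzρ, hρ1⟩ := exists_between (mem_ball_zero_iff.1 hz)
  have hU : z ∈ Metric.ball (0 : ℂ) ρ := mem_ball_zero_iff.2 hzρ
  have hu := summable_coeff_mul_pow hf ((norm_nonneg z).trans hzρ.le) hρ1
  have hdiff : ∀ n, DifferentiableOn ℂ (fun w : ℂ => (b n : ℂ) * w ^ (n + 2))
      (Metric.ball 0 ρ) := fun n => by fun_prop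
  have hbound : ∀ n, ∀ w ∈ Metric.ball (0 : ℂ) ρ,
      ‖(b n : ℂ) * w ^ (n + 2)‖ ≤ b n * ρ ^ (n + 2) := by
    intro n w hw
    rw [norm_mul, norm_pow, norm_real, Real.norm_of_nonneg (hb n)]
    exact mul_le_mul_of_nonneg_left
      (pow_le_pow_left₀ (norm_nonneg w) (mem_ball_zero_iff.1 hw).le _) (hb n)
  have hsum := hasSum_deriv_of_summable_norm hu hdiff Metric.isOpen_ball hbound hU
  have htsum := (differentiableOn_tsum_of_summable_norm hu hdiff Metric.isOpen_ball
    hbound).differentiableAt (Metric.isOpen_ball.mem_nhds hU)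
  have hfeq : f =ᶠ[𝓝 z] fun w => w - ∑' n, (b n : ℂ) * w ^ (n + 2) := by
    filter_upwards [Metric.isOpen_ball.mem_nhds hz] with w hw
    rw [(hf w hw).tsum_eq]; ring
  rw [(((hasDerivAt_id' z).sub htsum.hasDerivAt).congr_of_eventuallyEq hfeq).deriv,
    sub_sub_cancel]
  have hterm : ∀ n, deriv (fun w : ℂ => (b n : ℂ) * w ^ (n + 2)) z
      = (b n : ℂ) * ((n + 2) * z ^ (n + 1)) := fun n => by
    rw [deriv_const_mul _ (differentiableAt_pow _), deriv_pow_field]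
    push_cast; ring
  simpa only [hterm] using hsum

theorem hasSum_mul_deriv_sub_mul (hb : ∀ n, 0 ≤ b n)
    (hf : ∀ z ∈ Metric.ball (0 : ℂ) 1, HasSum (fun n : ℕ => (b n : ℂ) * z ^ (n + 2)) (z - f z))
    (β : ℝ) {z : ℂ} (hz : z ∈ Metric.ball (0 : ℂ) 1) :
    HasSum (fun n : ℕ => ((((n : ℝ) + 2 - β) * b n : ℝ) : ℂ) * z ^ (n + 2))
      ((1 - β) * z - (z * deriv f z - β * f z)) := by
  rw [show (1 - β) * z - (z * deriv f z - β * f z) = z * (1 - deriv f z) - β * (z - f z) by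
    ring]
  exact (((hasSum_one_sub_deriv hb hf hz).mul_left z).sub ((hf z hz).mul_left (β : ℂ)))
    |>.congr_fun fun n => by push_cast; ring

theorem summable_weighted_coeff_mul_pow (hb : ∀ n, 0 ≤ b n)
    (hf : ∀ z ∈ Metric.ball (0 : ℂ) 1, HasSum (fun n : ℕ => (b n : ℂ) * z ^ (n + 2)) (z - f z))
    (β : ℝ) {r : ℝ} (hr0 : 0 ≤ r) (hr1 : r < 1) :
    Summable fun n : ℕ => ((n : ℝ) + 2 - β) * b n * r ^ (n + 2) := by
  have hr : (r : ℂ) ∈ Metric.ball (0 : ℂ) 1 := by simpa [abs_of_nonneg hr0]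
  exact summable_ofReal.1 <|
    (hasSum_mul_deriv_sub_mul hb hf β hr).summable.congr fun n => by push_cast; rfl

theorem tsum_mul_pow_succ_ne_of_lt_re (hb : ∀ n, 0 ≤ b n)
    (hf : ∀ z ∈ Metric.ball (0 : ℂ) 1, HasSum (fun n : ℕ => (b n : ℂ) * z ^ (n + 2)) (z - f z))
    {α : ℝ} (hα : 0 ≤ α) {r : ℝ} (hr : r ∈ Ioo (0 : ℝ) 1)
    (h : α < ((r : ℂ) * deriv f r / f r).re) :
    ∑' n : ℕ, ((n : ℝ) + 2 - α) * b n * r ^ (n + 1) ≠ 1 - α := by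
  intro hS
  have hr' : (r : ℂ) ∈ Metric.ball (0 : ℂ) 1 := by simpa [abs_of_pos hr.1] using hr.2
  have hreal : ∑' n : ℕ, ((n : ℝ) + 2 - α) * b n * r ^ (n + 2) = r * (1 - α) := by
    rw [← hS, ← tsum_mul_left]
    exact tsum_congr fun n => by ring
  have hsum := (hasSum_mul_deriv_sub_mul hb hf α hr').tsum_eq
  have hcast := congrArg ((↑) : ℝ → ℂ) hreal
  rw [ofReal_tsum] at hcast
  push_cast at hsum hcast
  apply ne_zero_of_lt_re_div hα h
  linear_combination hsum - hcast

theorem norm_mul_deriv_sub_lt (hb : ∀ n, 0 ≤ b n)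
    (hf : ∀ z ∈ Metric.ball (0 : ℂ) 1, HasSum (fun n : ℕ => (b n : ℂ) * z ^ (n + 2)) (z - f z))
    {α : ℝ} (hα : α < 1) (hs : Summable fun n : ℕ => ((n : ℝ) + 2 - α) * b n)
    (hle : ∑' n : ℕ, ((n : ℝ) + 2 - α) * b n ≤ 1 - α)
    {z : ℂ} (hz : z ∈ Metric.ball (0 : ℂ) 1) (hz0 : z ≠ 0) :
    ‖z * deriv f z - f z‖ < (1 - α) * ‖f z‖ := by
  set r := ‖z‖
  have hr0 : 0 < r := norm_pos_iff.2 hz0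
  have hr1 : r < 1 := mem_ball_zero_iff.1 hz
  have hE : ‖z * deriv f z - f z‖ ≤ ∑' n : ℕ, ((n : ℝ) + 2 - 1) * b n * r ^ (n + 2) := by
    have := norm_le_tsum_of_hasSum_mul_pow (fun n => mul_nonneg (by linarith) (hb n))
      (hasSum_mul_deriv_sub_mul hb hf 1 hz) (summable_weighted_coeff_mul_pow hb hf 1 hr0.le hr1)
    rwa [ofReal_one, sub_self, zero_mul, zero_sub, norm_neg, one_mul] at this
  have hG : ‖z - f z‖ ≤ ∑' n : ℕ, b n * r ^ (n + 2) :=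
    norm_le_tsum_of_hasSum_mul_pow hb (hf z hz) (summable_coeff_mul_pow hf hr0.le hr1)
  have hsplit : ∑' n : ℕ, ((n : ℝ) + 2 - 1) * b n * r ^ (n + 2)
      + (1 - α) * ∑' n : ℕ, b n * r ^ (n + 2)
      = ∑' n : ℕ, ((n : ℝ) + 2 - α) * b n * r ^ (n + 2) := by
    rw [← tsum_mul_left, ← Summable.tsum_add (summable_weighted_coeff_mul_pow hb hf 1 hr0.le hr1)
      ((summable_coeff_mul_pow hf hr0.le hr1).mul_left _)]
    exact tsum_congr fun n => by ring
  have hbound : ∑' n : ℕ, ((n : ℝ) + 2 - α) * b n * r ^ (n + 2) ≤ (1 - α) * r ^ 2 := by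
    calc ∑' n : ℕ, ((n : ℝ) + 2 - α) * b n * r ^ (n + 2)
        ≤ ∑' n : ℕ, ((n : ℝ) + 2 - α) * b n * r ^ 2 :=
          (summable_weighted_coeff_mul_pow hb hf α hr0.le hr1).tsum_le_tsum
            (fun n => mul_le_mul_of_nonneg_left (pow_le_pow_of_le_one hr0.le hr1.le (by omega))
              (mul_nonneg (by linarith [n.cast_nonneg (α := ℝ)]) (hb n)))
            (hs.mul_right _)
      _ ≤ (1 - α) * r ^ 2 := by
          rw [tsum_mul_right]; exact mul_le_mul_of_nonneg_right hle (sq_nonneg r)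
  have hfz : r - ∑' n : ℕ, b n * r ^ (n + 2) ≤ ‖f z‖ := by
    linarith [norm_sub_norm_le z (f z)]
  have hr2 : (1 - α) * r ^ 2 < (1 - α) * r :=
    mul_lt_mul_of_pos_left (pow_lt_self_of_lt_one₀ hr0 hr1 one_lt_two) (by linarith)
  linarith [mul_le_mul_of_nonneg_left hfz (by linarith : (0 : ℝ) ≤ 1 - α)]

end StarlikeCriterion

theorem stmt9 (α : ℝ) (hα0 : 0 ≤ α) (hα1 : α < 1)
    (f : ℂ → ℂ) (a : ℕ → ℝ) (ha : ∀ n, 0 ≤ a n)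
    (hf : ∀ z ∈ Metric.ball (0 : ℂ) 1,
      HasSum (fun n : ℕ => ((a (n + 2) : ℝ) : ℂ) * z ^ (n + 2)) (z - f z)) :
    (∀ z ∈ Metric.ball (0 : ℂ) 1, z ≠ 0 →
      α < ((z * deriv f z / f z).re)) ↔
    (Summable (fun n : ℕ => (((n : ℝ) + 2) - α) * a (n + 2)) ∧
    ∑' n : ℕ, (((n : ℝ) + 2) - α) * a (n + 2) ≤ 1 - α) := by
  have hb : ∀ n, 0 ≤ a (n + 2) := fun n => ha (n + 2)
  constructor
  · intro hstar
    have hc : ∀ n : ℕ, 0 ≤ ((n : ℝ) + 2 - α) * a (n + 2) :=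
      fun n => mul_nonneg (by linarith [n.cast_nonneg (α := ℝ)]) (hb n)
    have hsum : ∀ r ∈ Ioo (0 : ℝ) 1,
        Summable fun n : ℕ => ((n : ℝ) + 2 - α) * a (n + 2) * r ^ (n + 1) := fun r hr =>
      ((summable_weighted_coeff_mul_pow hb hf α hr.1.le hr.2).mul_left r⁻¹).congr fun n => by
        rw [pow_succ]; field_simp [hr.1.ne']
    have hne : ∀ r ∈ Ioo (0 : ℝ) 1,
        ∑' n : ℕ, ((n : ℝ) + 2 - α) * a (n + 2) * r ^ (n + 1) ≠ 1 - α := fun r hr =>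
      tsum_mul_pow_succ_ne_of_lt_re hb hf hα0 hr
        (hstar r (by simpa [abs_of_pos hr.1] using hr.2) (ofReal_ne_zero.2 hr.1.ne'))
    exact summable_and_tsum_le_of_tsum_mul_pow_succ_le hc hsum fun r hr =>
      (tsum_mul_pow_succ_lt_of_ne hc (by linarith) hsum hne hr).le
  · rintro ⟨hs, hle⟩ z hz hz0
    exact lt_re_div_of_norm_sub_lt (norm_mul_deriv_sub_lt hb hf hα1 hs hle hz hz0)
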